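/- Subject reduction: if Γ ⊢ (M, s) : κ and (M, s) → (N, t), then Γ ⊢ (N, t) : κ. -/
import Mathlib


open Classical

/-- Locations -/
abbrev Loc := ℕ

/-! ### Syntax of λimp (de Bruijn indices) -/

mutual
inductive Val : Type where
  | var : ℕ → Val
  | lam : Comp → Val
inductive Comp : Type where
  | ret  : Val → Comp                     -- unit V
  | bind : Comp → Val → Comp              -- M ⋆ V
  | get  : Loc → Comp → Comp              -- get_ℓ(λ.M)
  | set  : Loc → Val → Comp → Comp        -- set_ℓ(V, M)
end

/-! ### Store and lookup terms -/

mutual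
inductive Store : Type where
  | emp : Store
  | upd : Loc → Lkp → Store → Store       -- set_ℓ(u, s)
inductive Lkp : Type where
  | val : Val → Lkp
  | lkp : Loc → Store → Lkp               -- get_ℓ(s)
end

def Store.dom : Store → Finset Loc
  | .emp => ∅
  | .upd ℓ _ s => insert ℓ s.dom

/-- s ∖ ℓ -/
def Store.erase (ℓ : Loc) : Store → Store
  | .emp => .emp
  | .upd ℓ' u s => if ℓ' = ℓ then s.erase ℓ else .upd ℓ' u (s.erase ℓ)

/-! ### The equational store theory -/

mutual
/-- ⊢ s = t -/
inductive StEq : Store → Store → Prop where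
  | refl (s) : StEq s s
  | symm : StEq s t → StEq t s
  | trans : StEq s t → StEq t r → StEq s r
  | congr : LkEq u u' → StEq s s' → StEq (.upd ℓ u s) (.upd ℓ u' s')
  | setGet (h : ℓ ∈ s.dom) : StEq (.upd ℓ (.lkp ℓ s) s) s
  | overwrite : StEq (.upd ℓ u (.upd ℓ w s)) (.upd ℓ u s)
  | commute (h : ℓ ≠ ℓ') :
      StEq (.upd ℓ u (.upd ℓ' w s)) (.upd ℓ' w (.upd ℓ u s))
/-- ⊢ u = u' -/
inductive LkEq : Lkp → Lkp → Prop where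
  | refl (u) : LkEq u u
  | symm : LkEq u v → LkEq v u
  | trans : LkEq u v → LkEq v w → LkEq u w
  | congr (ℓ) (h : ℓ ∈ s.dom) : StEq s s' → LkEq (.lkp ℓ s) (.lkp ℓ s')
  | getSet : LkEq (.lkp ℓ (.upd ℓ u s)) u
  | getSetNe (h : ℓ ≠ ℓ') : LkEq (.lkp ℓ (.upd ℓ' u s)) (.lkp ℓ s)
end

/-- Extensional equivalence s ≃ t of store terms. -/
def StExtEq (s t : Store) : Prop :=
  s.dom = t.dom ∧ ∀ ℓ ∈ s.dom, LkEq (.lkp ℓ s) (.lkp ℓ t)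

/-! ### Normal forms of stores -/

def Store.size : Store → ℕ
  | .emp => 0
  | .upd _ _ s => s.size + 1

theorem Store.erase_size (ℓ : Loc) : (s : Store) → (s.erase ℓ).size ≤ s.size
  | .emp => le_refl _
  | .upd ℓ' u s => by
      unfold Store.erase
      by_cases h : ℓ' = ℓ
      · simpa [h, Store.size] using le_trans (Store.erase_size ℓ s) (Nat.le_succ _)
      · simpa [h, Store.size] using Nat.succ_le_succ (Store.erase_size ℓ s)

def Store.nf : Store → Store
  | .emp => .emp
  | .upd ℓ u s => .upd ℓ u ((s.erase ℓ).nf)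
termination_by s => s.size
decreasing_by
  simp only [Store.size]
  exact Nat.lt_succ_of_le (Store.erase_size ℓ s)

/-! ### Closedness -/

mutual
def Val.ClosedUnder : ℕ → Val → Prop
  | k, .var n => n < k
  | k, .lam M => Comp.ClosedUnder (k+1) M
def Comp.ClosedUnder : ℕ → Comp → Prop
  | k, .ret V => Val.ClosedUnder k V
  | k, .bind M V => Comp.ClosedUnder k M ∧ Val.ClosedUnder k V
  | k, .get _ M => Comp.ClosedUnder (k+1) M
  | k, .set _ V M => Val.ClosedUnder k V ∧ Comp.ClosedUnder k M
end

mutual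
def Store.Closed : Store → Prop
  | .emp => True
  | .upd _ u s => u.Closed ∧ s.Closed
def Lkp.Closed : Lkp → Prop
  | .val V => Val.ClosedUnder 0 V
  | .lkp _ s => s.Closed
end

/-! ### Substitution -/

mutual
def Val.shiftAux (c : ℕ) : Val → Val
  | .var n => if n < c then .var n else .var (n+1)
  | .lam M => .lam (Comp.shiftAux (c+1) M)
def Comp.shiftAux (c : ℕ) : Comp → Comp
  | .ret V => .ret (V.shiftAux c)
  | .bind M V => .bind (M.shiftAux c) (V.shiftAux c)
  | .get ℓ M => .get ℓ (M.shiftAux (c+1))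
  | .set ℓ V M => .set ℓ (V.shiftAux c) (M.shiftAux c)
end

mutual
/-- capture-avoiding substitution of `W` for the variable `k` in a value -/
def Val.substV (k : ℕ) (W : Val) : Val → Val
  | .var n => if n = k then W else if k < n then .var (n-1) else .var n
  | .lam M => .lam (Comp.substC (k+1) (Val.shiftAux 0 W) M)
/-- capture-avoiding substitution of `W` for the variable `k` in a computation: M[W/k] -/
def Comp.substC (k : ℕ) (W : Val) : Comp → Comp
  | .ret V => .ret (Val.substV k W V)
  | .bind M V => .bind (Comp.substC k W M) (Val.substV k W V)
  | .get ℓ M => .get ℓ (Comp.substC (k+1) (Val.shiftAux 0 W) M)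
  | .set ℓ V M => .set ℓ (Val.substV k W V) (Comp.substC k W M)
end

/-- simultaneous substitution of closed values for the free variables 0,…,n-1 -/
def msubst (Vs : List Val) (M : Comp) : Comp :=
  Vs.foldl (fun acc V => Comp.substC 0 V acc) M

/-! ### Small-step reduction on configurations -/

inductive Red : Comp × Store → Comp × Store → Prop where
  | beta : Red (.bind (.ret V) (.lam M), s) (Comp.substC 0 V M, s)
  | bindl : Red (M, s) (N, t) → Red (.bind M V, s) (.bind N V, t)
  | get : LkEq (.lkp ℓ s) (.val V) → Red (.get ℓ M, s) (Comp.substC 0 V M, s)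
  | set : Red (.set ℓ V M, s) (M, .upd ℓ (.val V) s)

/-- reflexive-transitive closure →* -/
def RedStar : Comp × Store → Comp × Store → Prop := Relation.ReflTransGen Red

/-! ### Big-step convergence -/

inductive BigStep : Comp → Store → Val → Store → Prop where
  | ret : BigStep (.ret V) s V s
  | bind : BigStep M s V s' → BigStep (Comp.substC 0 V N) s' W t →
      BigStep (.bind M (.lam N)) s W t
  | get : LkEq (.lkp ℓ s) (.val V) → BigStep (Comp.substC 0 V M) s W t →
      BigStep (.get ℓ M) s W t
  | set : BigStep M (.upd ℓ (.val V) s) W t → BigStep (.set ℓ V M) s W t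

/-- the partial function M(s): the result (V,t) if (M,s) ⇓ (V,t), and ⊥ (i.e. `none`) otherwise -/
noncomputable def run (M : Comp) (s : Store) : Option (Val × Store) :=
  if h : ∃ p : Val × Store, BigStep M s p.1 p.2 then some h.choose else none

/-! ### Intersection types of the four sorts -/

mutual
/-- value types δ -/
inductive TyD : Type where
  | arrow : TyD → TyT → TyD
  | inter : TyD → TyD → TyD
  | omega : TyD
/-- store types σ -/
inductive TyS : Type where
  | loc : Loc → TyD → TyS
  | inter : TyS → TyS → TyS
  | omega : TyS
/-- result types κ -/
inductive TyC : Type where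
  | prod : TyD → TyS → TyC
  | inter : TyC → TyC → TyC
  | omega : TyC
/-- computation types τ -/
inductive TyT : Type where
  | arrow : TyS → TyC → TyT
  | inter : TyT → TyT → TyT
  | omega : TyT
end

def TyS.domS : TyS → Finset Loc
  | .loc ℓ _ => {ℓ}
  | .inter σ σ' => σ.domS ∪ σ'.domS
  | .omega => ∅

/-! ### Subtyping -/

mutual
inductive SubD : TyD → TyD → Prop where
  | refl (δ) : SubD δ δ
  | trans : SubD δ₁ δ₂ → SubD δ₂ δ₃ → SubD δ₁ δ₃
  | leOmega (δ) : SubD δ .omega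
  | interLeft : SubD (TyD.inter δ δ') δ
  | interRight : SubD (TyD.inter δ δ') δ'
  | interGlb : SubD δ δ₁ → SubD δ δ₂ → SubD δ (TyD.inter δ₁ δ₂)
  | interMono : SubD δ₁ δ₁' → SubD δ₂ δ₂' → SubD (TyD.inter δ₁ δ₂) (TyD.inter δ₁' δ₂')
  | omegaArrow : SubD .omega (.arrow .omega .omega)
  | arrowInter : SubD ((TyD.arrow δ τ).inter (.arrow δ τ')) (TyD.arrow δ (TyT.inter τ τ'))
  | arrowMono : SubD δ' δ → SubT τ τ' → SubD (.arrow δ τ) (.arrow δ' τ')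
inductive SubS : TyS → TyS → Prop where
  | refl (σ) : SubS σ σ
  | trans : SubS σ₁ σ₂ → SubS σ₂ σ₃ → SubS σ₁ σ₃
  | leOmega (σ) : SubS σ .omega
  | interLeft : SubS (TyS.inter σ σ') σ
  | interRight : SubS (TyS.inter σ σ') σ'
  | interGlb : SubS σ σ₁ → SubS σ σ₂ → SubS σ (TyS.inter σ₁ σ₂)
  | interMono : SubS σ₁ σ₁' → SubS σ₂ σ₂' → SubS (TyS.inter σ₁ σ₂) (TyS.inter σ₁' σ₂')
  | locInter : SubS ((TyS.loc ℓ δ).inter (.loc ℓ δ')) (TyS.loc ℓ (TyD.inter δ δ'))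
  | locMono : SubD δ δ' → SubS (.loc ℓ δ) (.loc ℓ δ')
inductive SubC : TyC → TyC → Prop where
  | refl (κ) : SubC κ κ
  | trans : SubC κ₁ κ₂ → SubC κ₂ κ₃ → SubC κ₁ κ₃
  | leOmega (κ) : SubC κ .omega
  | interLeft : SubC (TyC.inter κ κ') κ
  | interRight : SubC (TyC.inter κ κ') κ'
  | interGlb : SubC κ κ₁ → SubC κ κ₂ → SubC κ (TyC.inter κ₁ κ₂)
  | interMono : SubC κ₁ κ₁' → SubC κ₂ κ₂' → SubC (TyC.inter κ₁ κ₂) (TyC.inter κ₁' κ₂')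
  | omegaProd : SubC .omega (.prod .omega .omega)
  | prodInter : SubC ((TyC.prod δ σ).inter (.prod δ' σ')) (TyC.prod (TyD.inter δ δ') (TyS.inter σ σ'))
  | prodMono : SubD δ δ' → SubS σ σ' → SubC (.prod δ σ) (.prod δ' σ')
inductive SubT : TyT → TyT → Prop where
  | refl (τ) : SubT τ τ
  | trans : SubT τ₁ τ₂ → SubT τ₂ τ₃ → SubT τ₁ τ₃
  | leOmega (τ) : SubT τ .omega
  | interLeft : SubT (TyT.inter τ τ') τ
  | interRight : SubT (TyT.inter τ τ') τ'
  | interGlb : SubT τ τ₁ → SubT τ τ₂ → SubT τ (TyT.inter τ₁ τ₂)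
  | interMono : SubT τ₁ τ₁' → SubT τ₂ τ₂' → SubT (TyT.inter τ₁ τ₂) (TyT.inter τ₁' τ₂')
  | omegaArrow : SubT .omega (.arrow .omega .omega)
  | arrowInter : SubT ((TyT.arrow σ κ).inter (.arrow σ κ')) (TyT.arrow σ (TyC.inter κ κ'))
  | arrowMono : SubS σ' σ → SubC κ κ' → SubT (.arrow σ κ) (.arrow σ' κ')
end

/-! ### Finite intersections -/

def InterD (l : List TyD) : TyD := l.foldr TyD.inter TyD.omega
def InterS (l : List TyS) : TyS := l.foldr TyS.inter TyS.omega
def InterC (l : List TyC) : TyC := l.foldr TyC.inter TyC.omega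
def InterT (l : List TyT) : TyT := l.foldr TyT.inter TyT.omega

/-! ### Type assignment -/

/-- typing contexts (de Bruijn) -/
abbrev Ctx := List TyD

mutual
inductive TypV : Ctx → Val → TyD → Prop where
  | var : Γ[n]? = some δ → TypV Γ (.var n) δ
  | lam : TypC (δ :: Γ) M τ → TypV Γ (.lam M) (.arrow δ τ)
  | omega : TypV Γ V .omega
  | inter : TypV Γ V δ → TypV Γ V δ' → TypV Γ V (TyD.inter δ δ')
  | sub : TypV Γ V δ → SubD δ δ' → TypV Γ V δ'
inductive TypC : Ctx → Comp → TyT → Prop where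
  | ret : TypV Γ V δ → TypC Γ (.ret V) (.arrow σ (.prod δ σ))
  | bind : TypC Γ M (.arrow σ (.prod δ' σ')) →
      TypV Γ V (.arrow δ' (.arrow σ' (.prod δ'' σ''))) →
      TypC Γ (.bind M V) (.arrow σ (.prod δ'' σ''))
  | get : TypC (δ :: Γ) M (.arrow σ κ) →
      TypC Γ (.get ℓ M) (.arrow ((TyS.loc ℓ δ).inter σ) κ)
  | set : TypV Γ V δ → TypC Γ M (.arrow ((TyS.loc ℓ δ).inter σ) κ) →
      ℓ ∉ σ.domS → TypC Γ (.set ℓ V M) (.arrow σ κ)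
  | omega : TypC Γ M .omega
  | inter : TypC Γ M τ → TypC Γ M τ' → TypC Γ M (TyT.inter τ τ')
  | sub : TypC Γ M τ → SubT τ τ' → TypC Γ M τ'
end

mutual
inductive TypS : Ctx → Store → TyS → Prop where
  | updA : TypL Γ u δ → TypS Γ (.upd ℓ u s) (.loc ℓ δ)
  | updB : TypS Γ s (.loc ℓ' δ) → ℓ ≠ ℓ' → TypS Γ (.upd ℓ u s) (.loc ℓ' δ)
  | omega : TypS Γ s .omega
  | inter : TypS Γ s σ → TypS Γ s σ' → TypS Γ s (TyS.inter σ σ')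
  | sub : TypS Γ s σ → SubS σ σ' → TypS Γ s σ'
inductive TypL : Ctx → Lkp → TyD → Prop where
  | val : TypV Γ V δ → TypL Γ (.val V) δ
  | lkp : TypS Γ s (.loc ℓ δ) → TypL Γ (.lkp ℓ s) δ
  | omega : TypL Γ u .omega
  | inter : TypL Γ u δ → TypL Γ u δ' → TypL Γ u (TyD.inter δ δ')
  | sub : TypL Γ u δ → SubD δ δ' → TypL Γ u δ'
end

inductive TypConf : Ctx → Comp → Store → TyC → Prop where
  | conf : TypC Γ M (.arrow σ κ) → TypS Γ s σ → TypConf Γ M s κ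
  | omega : TypConf Γ M s .omega
  | inter : TypConf Γ M s κ → TypConf Γ M s κ' → TypConf Γ M s (TyC.inter κ κ')
  | sub : TypConf Γ M s κ → SubC κ κ' → TypConf Γ M s κ'

/-! ### Saturated sets -/

mutual
def SatD : TyD → Set Val
  | .omega => {V | Val.ClosedUnder 0 V}
  | .arrow δ τ =>
      {V | Val.ClosedUnder 0 V ∧ ∀ W ∈ SatD δ, Comp.bind (.ret W) V ∈ SatT τ}
  | .inter δ δ' => SatD δ ∩ SatD δ'
def SatS : TyS → Set Store
  | .omega => {s | s.Closed}
  | .loc ℓ δ =>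
      {s | s.Closed ∧ ℓ ∈ s.dom ∧ ∃ V ∈ SatD δ, LkEq (.lkp ℓ s) (.val V)}
  | .inter σ σ' => SatS σ ∩ SatS σ'
def SatC : TyC → Set (Option (Val × Store))
  | .omega => {r | ∀ V t, r = some (V, t) → Val.ClosedUnder 0 V ∧ Store.Closed t}
  | .prod δ σ => {r | ∃ V t, r = some (V, t) ∧ V ∈ SatD δ ∧ t ∈ SatS σ}
  | .inter κ κ' => SatC κ ∩ SatC κ'
def SatT : TyT → Set Comp
  | .omega => {M | Comp.ClosedUnder 0 M}
  | .arrow σ κ => {M | Comp.ClosedUnder 0 M ∧ ∀ s ∈ SatS σ, run M s ∈ SatC κ}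
  | .inter τ τ' => SatT τ ∩ SatT τ'
end
/-! ### Application/projection operators on types -/

noncomputable def appD (δ : TyD) (δ₀ : TyD) : TyT :=
  match δ with
  | .omega => .omega
  | .arrow δ₁ τ => if SubD δ₀ δ₁ then τ else .omega
  | .inter δ₁ δ₂ => .inter (appD δ₁ δ₀) (appD δ₂ δ₀)

noncomputable def appT (τ : TyT) (σ : TyS) : TyC :=
  match τ with
  | .omega => .omega
  | .arrow σ₁ κ => if SubS σ σ₁ then κ else .omega
  | .inter τ₁ τ₂ => .inter (appT τ₁ σ) (appT τ₂ σ)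

def fstC : TyC → TyD
  | .omega => .omega
  | .prod δ _ => δ
  | .inter κ₁ κ₂ => .inter (fstC κ₁) (fstC κ₂)

def sndC : TyC → TyS
  | .omega => .omega
  | .prod _ σ => σ
  | .inter κ₁ κ₂ => .inter (sndC κ₁) (sndC κ₂)

def projS (σ : TyS) (ℓ : Loc) : TyD :=
  match σ with
  | .omega => .omega
  | .loc ℓ' δ => if ℓ' = ℓ then δ else .omega
  | .inter σ₁ σ₂ => .inter (projS σ₁ ℓ) (projS σ₂ ℓ)

/-! quick sanity -/
example : appT (.arrow σ κ) σ = κ := by simp [appT, SubS.refl]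
/-! ### Basic subtyping combinators -/

theorem subT_arrow_pair {σ₁ σ₂ : TyS} {κ₁ κ₂ : TyC} :
    SubT ((TyT.arrow σ₁ κ₁).inter (.arrow σ₂ κ₂))
      (.arrow (σ₁.inter σ₂) (κ₁.inter κ₂)) :=
  SubT.trans
    (SubT.interMono (SubT.arrowMono SubS.interLeft (SubC.refl _))
      (SubT.arrowMono SubS.interRight (SubC.refl _))) SubT.arrowInter

theorem subD_arrow_pair {δ₁ δ₂ : TyD} {τ₁ τ₂ : TyT} :
    SubD ((TyD.arrow δ₁ τ₁).inter (.arrow δ₂ τ₂))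
      (.arrow (δ₁.inter δ₂) (τ₁.inter τ₂)) :=
  SubD.trans
    (SubD.interMono (SubD.arrowMono SubD.interLeft (SubT.refl _))
      (SubD.arrowMono SubD.interRight (SubT.refl _))) SubD.arrowInter

theorem subT_omega_arrow {σ : TyS} {κ : TyC} (h : SubC .omega κ) :
    SubT .omega (.arrow σ κ) :=
  SubT.trans SubT.omegaArrow (SubT.arrowMono (SubS.leOmega _) h)

theorem subD_omega_arrow {δ : TyD} {τ : TyT} (h : SubT .omega τ) :
    SubD .omega (.arrow δ τ) :=
  SubD.trans SubD.omegaArrow (SubD.arrowMono (SubD.leOmega _) h)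

theorem subT_arrow_app : (τ : TyT) → (σ : TyS) → SubT τ (.arrow σ (appT τ σ))
  | .omega, σ => subT_omega_arrow (SubC.refl _)
  | .arrow σ₁ κ, σ => by
      by_cases h : SubS σ σ₁
      · simpa [appT, h] using SubT.arrowMono h (SubC.refl κ)
      · simp only [appT, if_neg h]
        exact SubT.trans (SubT.leOmega _) (subT_omega_arrow (SubC.refl _))
  | .inter τ₁ τ₂, σ =>
      SubT.trans (SubT.interMono (subT_arrow_app τ₁ σ) (subT_arrow_app τ₂ σ))
        SubT.arrowInter

theorem subD_arrow_app : (δ : TyD) → (δ₀ : TyD) → SubD δ (.arrow δ₀ (appD δ δ₀))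
  | .omega, δ₀ => subD_omega_arrow (SubT.refl _)
  | .arrow δ₁ τ, δ₀ => by
      by_cases h : SubD δ₀ δ₁
      · simpa [appD, h] using SubD.arrowMono h (SubT.refl τ)
      · simp only [appD, if_neg h]
        exact SubD.trans (SubD.leOmega _) (subD_omega_arrow (SubT.refl _))
  | .inter δ₁ δ₂, δ₀ =>
      SubD.trans (SubD.interMono (subD_arrow_app δ₁ δ₀) (subD_arrow_app δ₂ δ₀))
        SubD.arrowInter

theorem subC_prod : (κ : TyC) → SubC κ (.prod (fstC κ) (sndC κ))
  | .omega => SubC.omegaProd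
  | .prod δ σ => SubC.refl _
  | .inter κ₁ κ₂ =>
      SubC.trans (SubC.interMono (subC_prod κ₁) (subC_prod κ₂)) SubC.prodInter

theorem projS_notin : {σ : TyS} → {ℓ : Loc} → ℓ ∉ σ.domS → SubD .omega (projS σ ℓ)
  | .omega, ℓ, _ => SubD.refl _
  | .loc ℓ' δ, ℓ, h => by
      have : ℓ' ≠ ℓ := by rintro rfl; simp [TyS.domS] at h
      simp [projS, this]
      exact SubD.refl _
  | .inter σ₁ σ₂, ℓ, h => by
      simp [TyS.domS] at h
      exact SubD.interGlb (projS_notin h.1) (projS_notin h.2)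
/-! ### Monotonicity of the application/projection operators under subtyping -/

theorem sub_mono_all :
    (∀ {δ δ' : TyD}, SubD δ δ' → ∀ δ₀, SubT (appD δ δ₀) (appD δ' δ₀)) ∧
    (∀ {σ σ' : TyS}, SubS σ σ' →
      (∀ ℓ, SubD (projS σ ℓ) (projS σ' ℓ)) ∧ σ'.domS ⊆ σ.domS) ∧
    (∀ {κ κ' : TyC}, SubC κ κ' → SubD (fstC κ) (fstC κ') ∧ SubS (sndC κ) (sndC κ')) ∧
    (∀ {τ τ' : TyT}, SubT τ τ' → ∀ σ, SubC (appT τ σ) (appT τ' σ)) := by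
  refine ⟨@SubD.rec
      (fun a b _ => ∀ δ₀, SubT (appD a δ₀) (appD b δ₀))
      (fun a b _ => (∀ ℓ, SubD (projS a ℓ) (projS b ℓ)) ∧ b.domS ⊆ a.domS)
      (fun a b _ => SubD (fstC a) (fstC b) ∧ SubS (sndC a) (sndC b))
      (fun a b _ => ∀ σ, SubC (appT a σ) (appT b σ))
      ?c1 ?c2 ?c3 ?c4 ?c5 ?c6 ?c7 ?c8 ?c9 ?c10 ?c11 ?c12 ?c13 ?c14 ?c15 ?c16 ?c17 ?c18 ?c19 ?c20 ?c21 ?c22 ?c23 ?c24 ?c25 ?c26 ?c27 ?c28 ?c29 ?c30 ?c31 ?c32 ?c33 ?c34 ?c35 ?c36 ?c37 ?c38 ?c39,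
    @SubS.rec
      (fun a b _ => ∀ δ₀, SubT (appD a δ₀) (appD b δ₀))
      (fun a b _ => (∀ ℓ, SubD (projS a ℓ) (projS b ℓ)) ∧ b.domS ⊆ a.domS)
      (fun a b _ => SubD (fstC a) (fstC b) ∧ SubS (sndC a) (sndC b))
      (fun a b _ => ∀ σ, SubC (appT a σ) (appT b σ))
      ?c1 ?c2 ?c3 ?c4 ?c5 ?c6 ?c7 ?c8 ?c9 ?c10 ?c11 ?c12 ?c13 ?c14 ?c15 ?c16 ?c17 ?c18 ?c19 ?c20 ?c21 ?c22 ?c23 ?c24 ?c25 ?c26 ?c27 ?c28 ?c29 ?c30 ?c31 ?c32 ?c33 ?c34 ?c35 ?c36 ?c37 ?c38 ?c39,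
    @SubC.rec
      (fun a b _ => ∀ δ₀, SubT (appD a δ₀) (appD b δ₀))
      (fun a b _ => (∀ ℓ, SubD (projS a ℓ) (projS b ℓ)) ∧ b.domS ⊆ a.domS)
      (fun a b _ => SubD (fstC a) (fstC b) ∧ SubS (sndC a) (sndC b))
      (fun a b _ => ∀ σ, SubC (appT a σ) (appT b σ))
      ?c1 ?c2 ?c3 ?c4 ?c5 ?c6 ?c7 ?c8 ?c9 ?c10 ?c11 ?c12 ?c13 ?c14 ?c15 ?c16 ?c17 ?c18 ?c19 ?c20 ?c21 ?c22 ?c23 ?c24 ?c25 ?c26 ?c27 ?c28 ?c29 ?c30 ?c31 ?c32 ?c33 ?c34 ?c35 ?c36 ?c37 ?c38 ?c39,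
    @SubT.rec
      (fun a b _ => ∀ δ₀, SubT (appD a δ₀) (appD b δ₀))
      (fun a b _ => (∀ ℓ, SubD (projS a ℓ) (projS b ℓ)) ∧ b.domS ⊆ a.domS)
      (fun a b _ => SubD (fstC a) (fstC b) ∧ SubS (sndC a) (sndC b))
      (fun a b _ => ∀ σ, SubC (appT a σ) (appT b σ))
      ?c1 ?c2 ?c3 ?c4 ?c5 ?c6 ?c7 ?c8 ?c9 ?c10 ?c11 ?c12 ?c13 ?c14 ?c15 ?c16 ?c17 ?c18 ?c19 ?c20 ?c21 ?c22 ?c23 ?c24 ?c25 ?c26 ?c27 ?c28 ?c29 ?c30 ?c31 ?c32 ?c33 ?c34 ?c35 ?c36 ?c37 ?c38 ?c39⟩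
  -- D cases
  case c1 => exact fun δ δ₀ => SubT.refl _
  case c2 => exact fun _ _ ih1 ih2 δ₀ => SubT.trans (ih1 δ₀) (ih2 δ₀)
  case c3 => exact fun δ δ₀ => SubT.leOmega _
  case c4 => exact fun δ₀ => SubT.interLeft
  case c5 => exact fun δ₀ => SubT.interRight
  case c6 => exact fun _ _ ih1 ih2 δ₀ => SubT.interGlb (ih1 δ₀) (ih2 δ₀)
  case c7 => exact fun _ _ ih1 ih2 δ₀ => SubT.interMono (ih1 δ₀) (ih2 δ₀)
  case c8 =>
    intro δ₀
    simp only [appD]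
    split <;> exact SubT.leOmega _
  case c9 =>
    intro δ τ τ' δ₀
    simp only [appD]
    split
    · exact SubT.refl _
    · exact SubT.leOmega _
  case c10 =>
    intro δ' δ τ τ' hδ hτ ih1 ih2 δ₀
    simp only [appD]
    by_cases h : SubD δ₀ δ'
    · rw [if_pos (SubD.trans h hδ), if_pos h]
      exact hτ
    · rw [if_neg h]
      exact SubT.leOmega _
  -- S cases
  case c11 => exact fun σ => ⟨fun ℓ => SubD.refl _, subset_rfl⟩
  case c12 =>
    exact fun _ _ ih1 ih2 =>
      ⟨fun ℓ => SubD.trans (ih1.1 ℓ) (ih2.1 ℓ), ih2.2.trans ih1.2⟩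
  case c13 => exact fun σ => ⟨fun ℓ => SubD.leOmega _, by simp [TyS.domS]⟩
  case c14 =>
    exact fun {σ σ'} => ⟨fun ℓ => SubD.interLeft, by simp [TyS.domS]⟩
  case c15 =>
    exact fun {σ σ'} => ⟨fun ℓ => SubD.interRight, by simp [TyS.domS]⟩
  case c16 =>
    exact fun _ _ ih1 ih2 =>
      ⟨fun ℓ => SubD.interGlb (ih1.1 ℓ) (ih2.1 ℓ),
       by simp only [TyS.domS]; exact Finset.union_subset ih1.2 ih2.2⟩
  case c17 =>
    exact fun _ _ ih1 ih2 =>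
      ⟨fun ℓ => SubD.interMono (ih1.1 ℓ) (ih2.1 ℓ),
       by simp only [TyS.domS]; exact Finset.union_subset_union ih1.2 ih2.2⟩
  case c18 =>
    refine ⟨fun ℓ₀ => ?_, by simp [TyS.domS]⟩
    simp only [projS]
    split
    · exact SubD.refl _
    · exact SubD.leOmega _
  case c19 =>
    intro δ δ' ℓ hδ ih
    refine ⟨fun ℓ₀ => ?_, by simp [TyS.domS]⟩
    simp only [projS]
    split
    · exact hδ
    · exact SubD.refl _
  -- C cases
  case c20 => exact fun κ => ⟨SubD.refl _, SubS.refl _⟩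
  case c21 => exact fun _ _ ih1 ih2 => ⟨SubD.trans ih1.1 ih2.1, SubS.trans ih1.2 ih2.2⟩
  case c22 => exact fun κ => ⟨SubD.leOmega _, SubS.leOmega _⟩
  case c23 => exact ⟨SubD.interLeft, SubS.interLeft⟩
  case c24 => exact ⟨SubD.interRight, SubS.interRight⟩
  case c25 => exact fun _ _ ih1 ih2 => ⟨SubD.interGlb ih1.1 ih2.1, SubS.interGlb ih1.2 ih2.2⟩
  case c26 => exact fun _ _ ih1 ih2 => ⟨SubD.interMono ih1.1 ih2.1, SubS.interMono ih1.2 ih2.2⟩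
  case c27 => exact ⟨SubD.refl _, SubS.refl _⟩
  case c28 => exact ⟨SubD.refl _, SubS.refl _⟩
  case c29 => exact fun hδ hσ _ _ => ⟨hδ, hσ⟩
  -- T cases
  case c30 => exact fun τ σ => SubC.refl _
  case c31 => exact fun _ _ ih1 ih2 σ => SubC.trans (ih1 σ) (ih2 σ)
  case c32 => exact fun τ σ => SubC.leOmega _
  case c33 => exact fun σ => SubC.interLeft
  case c34 => exact fun σ => SubC.interRight
  case c35 => exact fun _ _ ih1 ih2 σ => SubC.interGlb (ih1 σ) (ih2 σ)
  case c36 => exact fun _ _ ih1 ih2 σ => SubC.interMono (ih1 σ) (ih2 σ)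
  case c37 =>
    intro σ
    simp only [appT]
    split <;> exact SubC.leOmega _
  case c38 =>
    intro σ κ κ' σ₀
    simp only [appT]
    split
    · exact SubC.refl _
    · exact SubC.leOmega _
  case c39 =>
    intro σ' σ κ κ' hσ hκ ih1 ih2 σ₀
    simp only [appT]
    by_cases h : SubS σ₀ σ'
    · rw [if_pos (SubS.trans h hσ), if_pos h]
      exact hκ
    · rw [if_neg h]
      exact SubC.leOmega _

theorem subD_mono {δ δ' : TyD} (h : SubD δ δ') (δ₀ : TyD) :
    SubT (appD δ δ₀) (appD δ' δ₀) := sub_mono_all.1 h δ₀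
theorem subS_proj {σ σ' : TyS} (h : SubS σ σ') (ℓ : Loc) :
    SubD (projS σ ℓ) (projS σ' ℓ) := (sub_mono_all.2.1 h).1 ℓ
theorem subS_dom {σ σ' : TyS} (h : SubS σ σ') : σ'.domS ⊆ σ.domS :=
  (sub_mono_all.2.1 h).2
theorem subC_fst {κ κ' : TyC} (h : SubC κ κ') : SubD (fstC κ) (fstC κ') :=
  (sub_mono_all.2.2.1 h).1
theorem subC_snd {κ κ' : TyC} (h : SubC κ κ') : SubS (sndC κ) (sndC κ') :=
  (sub_mono_all.2.2.1 h).2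
theorem subT_mono {τ τ' : TyT} (h : SubT τ τ') (σ : TyS) :
    SubC (appT τ σ) (appT τ' σ) := sub_mono_all.2.2.2 h σ

theorem subT_app {τ : TyT} {σ : TyS} {κ : TyC} (h : SubT τ (.arrow σ κ)) :
    SubC (appT τ σ) κ := by
  have := subT_mono h σ
  simpa [appT, SubS.refl] using this

theorem subD_app {δ : TyD} {δ₀ : TyD} {τ : TyT} (h : SubD δ (.arrow δ₀ τ)) :
    SubT (appD δ δ₀) τ := by
  have := subD_mono h δ₀
  simpa [appD, SubD.refl] using this
/-! ### omega-typings -/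

theorem typC_arrow_omega {Γ : Ctx} {M : Comp} {σ : TyS} :
    TypC Γ M (.arrow σ .omega) :=
  TypC.sub TypC.omega (subT_omega_arrow (SubC.refl _))

theorem typC_arrow_prod_omega {Γ : Ctx} {M : Comp} {σ : TyS} :
    TypC Γ M (.arrow σ (.prod .omega .omega)) :=
  TypC.sub TypC.omega (subT_omega_arrow SubC.omegaProd)

theorem typV_omega_fun {Γ : Ctx} {V : Val} :
    TypV Γ V (.arrow .omega (.arrow .omega .omega)) :=
  TypV.sub TypV.omega (subD_omega_arrow (subT_omega_arrow (SubC.refl _)))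

/-! ### Context narrowing -/

abbrev CtxLE (Γ' Γ : Ctx) : Prop :=
  ∀ (n : ℕ) (δ : TyD), Γ[n]? = some δ → ∃ δ', Γ'[n]? = some δ' ∧ SubD δ' δ

theorem ctxLE_refl (Γ : Ctx) : CtxLE Γ Γ := fun _ δ h => ⟨δ, h, SubD.refl _⟩

theorem ctxLE_cons {Γ' Γ : Ctx} {δ' δ : TyD} (hd : SubD δ' δ) (h : CtxLE Γ' Γ) :
    CtxLE (δ' :: Γ') (δ :: Γ) := by
  rintro (_ | n) δ₁ hn
  · simp_all
  · simpa using h n δ₁ (by simpa using hn)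

theorem narrow_all :
    (∀ {Γ V δ}, TypV Γ V δ → ∀ Γ', CtxLE Γ' Γ → TypV Γ' V δ) ∧
    (∀ {Γ M τ}, TypC Γ M τ → ∀ Γ', CtxLE Γ' Γ → TypC Γ' M τ) := by
  refine ⟨@TypV.rec (fun Γ V δ _ => ∀ Γ', CtxLE Γ' Γ → TypV Γ' V δ)
      (fun Γ M τ _ => ∀ Γ', CtxLE Γ' Γ → TypC Γ' M τ)
      ?n1 ?n2 ?n3 ?n4 ?n5 ?n6 ?n7 ?n8 ?n9 ?n10 ?n11 ?n12,
    @TypC.rec (fun Γ V δ _ => ∀ Γ', CtxLE Γ' Γ → TypV Γ' V δ)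
      (fun Γ M τ _ => ∀ Γ', CtxLE Γ' Γ → TypC Γ' M τ)
      ?n1 ?n2 ?n3 ?n4 ?n5 ?n6 ?n7 ?n8 ?n9 ?n10 ?n11 ?n12⟩
  case n1 =>
    intro Γ n δ h Γ' hle
    obtain ⟨δ', h', hd⟩ := hle n δ h
    exact TypV.sub (TypV.var h') hd
  case n2 =>
    intro δ Γ M τ _ ih Γ' hle
    exact TypV.lam (ih _ (ctxLE_cons (SubD.refl _) hle))
  case n3 => exact fun _ _ => TypV.omega
  case n4 => exact fun _ _ ih1 ih2 Γ' hle => TypV.inter (ih1 Γ' hle) (ih2 Γ' hle)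
  case n5 => exact fun _ hd ih Γ' hle => TypV.sub (ih Γ' hle) hd
  case n6 => exact fun _ ih Γ' hle => TypC.ret (ih Γ' hle)
  case n7 => exact fun _ _ ih1 ih2 Γ' hle => TypC.bind (ih1 Γ' hle) (ih2 Γ' hle)
  case n8 =>
    intro Γ δ M σ κ ℓ _ ih Γ' hle
    exact TypC.get (ih _ (ctxLE_cons (SubD.refl _) hle))
  case n9 =>
    intro Γ V δ M ℓ σ κ _ _ hdom ih1 ih2 Γ' hle
    exact TypC.set (ih1 Γ' hle) (ih2 Γ' hle) hdom
  case n10 => exact fun _ _ => TypC.omega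
  case n11 => exact fun _ _ ih1 ih2 Γ' hle => TypC.inter (ih1 Γ' hle) (ih2 Γ' hle)
  case n12 => exact fun _ ht ih Γ' hle => TypC.sub (ih Γ' hle) ht

theorem typC_narrow {Γ : Ctx} {δ δ' : TyD} {M : Comp} {τ : TyT}
    (h : TypC (δ :: Γ) M τ) (hd : SubD δ' δ) : TypC (δ' :: Γ) M τ :=
  narrow_all.2 h _ (ctxLE_cons hd (ctxLE_refl Γ))
/-! ### Weakening and substitution -/

theorem weak_all :
    (∀ {Γ V δ}, TypV Γ V δ → ∀ A B (δ₀ : TyD), Γ = A ++ B →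
      TypV (A ++ δ₀ :: B) (Val.shiftAux A.length V) δ) ∧
    (∀ {Γ M τ}, TypC Γ M τ → ∀ A B (δ₀ : TyD), Γ = A ++ B →
      TypC (A ++ δ₀ :: B) (Comp.shiftAux A.length M) τ) := by
  refine ⟨@TypV.rec
      (fun Γ V δ _ => ∀ A B (δ₀ : TyD), Γ = A ++ B →
        TypV (A ++ δ₀ :: B) (Val.shiftAux A.length V) δ)
      (fun Γ M τ _ => ∀ A B (δ₀ : TyD), Γ = A ++ B →
        TypC (A ++ δ₀ :: B) (Comp.shiftAux A.length M) τ)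
      ?w1 ?w2 ?w3 ?w4 ?w5 ?w6 ?w7 ?w8 ?w9 ?w10 ?w11 ?w12,
    @TypC.rec
      (fun Γ V δ _ => ∀ A B (δ₀ : TyD), Γ = A ++ B →
        TypV (A ++ δ₀ :: B) (Val.shiftAux A.length V) δ)
      (fun Γ M τ _ => ∀ A B (δ₀ : TyD), Γ = A ++ B →
        TypC (A ++ δ₀ :: B) (Comp.shiftAux A.length M) τ)
      ?w1 ?w2 ?w3 ?w4 ?w5 ?w6 ?w7 ?w8 ?w9 ?w10 ?w11 ?w12⟩
  case w1 =>
    intro Γ n δ h A B δ₀ hΓ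
    subst hΓ
    by_cases hn : n < A.length
    · simp only [Val.shiftAux, if_pos hn]
      refine TypV.var ?_
      rw [List.getElem?_append_left hn]
      rwa [List.getElem?_append_left hn] at h
    · simp only [Val.shiftAux, if_neg hn]
      refine TypV.var ?_
      push_neg at hn
      rw [List.getElem?_append_right (by omega)]
      rw [List.getElem?_append_right hn] at h
      have : n + 1 - A.length = (n - A.length) + 1 := by omega
      rw [this]
      simpa using h
  case w2 =>
    intro δ Γ M τ _ ih A B δ₀ hΓ
    subst hΓ
    exact TypV.lam (by simpa using ih (δ :: A) B δ₀ rfl)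
  case w3 => exact fun _ _ _ _ => TypV.omega
  case w4 => exact fun _ _ ih1 ih2 A B δ₀ h => TypV.inter (ih1 A B δ₀ h) (ih2 A B δ₀ h)
  case w5 => exact fun _ hd ih A B δ₀ h => TypV.sub (ih A B δ₀ h) hd
  case w6 => exact fun _ ih A B δ₀ h => TypC.ret (ih A B δ₀ h)
  case w7 => exact fun _ _ ih1 ih2 A B δ₀ h => TypC.bind (ih1 A B δ₀ h) (ih2 A B δ₀ h)
  case w8 =>
    intro δ Γ M σ κ ℓ _ ih A B δ₀ hΓ
    subst hΓ
    exact TypC.get (by simpa using ih (δ :: A) B δ₀ rfl)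
  case w9 =>
    intro Γ V δ M ℓ σ κ _ _ hdom ih1 ih2 A B δ₀ h
    exact TypC.set (ih1 A B δ₀ h) (ih2 A B δ₀ h) hdom
  case w10 => exact fun _ _ _ _ => TypC.omega
  case w11 => exact fun _ _ ih1 ih2 A B δ₀ h => TypC.inter (ih1 A B δ₀ h) (ih2 A B δ₀ h)
  case w12 => exact fun _ ht ih A B δ₀ h => TypC.sub (ih A B δ₀ h) ht

theorem typV_weak0 {Γ : Ctx} {W : Val} {δ₀ δ : TyD} (h : TypV Γ W δ₀) :
    TypV (δ :: Γ) (Val.shiftAux 0 W) δ₀ := by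
  simpa using weak_all.1 h [] Γ δ rfl

theorem subst_all :
    (∀ {Γ V δ}, TypV Γ V δ → ∀ A B (δ₀ : TyD) (W : Val), Γ = A ++ δ₀ :: B →
      TypV (A ++ B) W δ₀ → TypV (A ++ B) (Val.substV A.length W V) δ) ∧
    (∀ {Γ M τ}, TypC Γ M τ → ∀ A B (δ₀ : TyD) (W : Val), Γ = A ++ δ₀ :: B →
      TypV (A ++ B) W δ₀ → TypC (A ++ B) (Comp.substC A.length W M) τ) := by
  refine ⟨@TypV.rec
      (fun Γ V δ _ => ∀ A B (δ₀ : TyD) (W : Val), Γ = A ++ δ₀ :: B →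
        TypV (A ++ B) W δ₀ → TypV (A ++ B) (Val.substV A.length W V) δ)
      (fun Γ M τ _ => ∀ A B (δ₀ : TyD) (W : Val), Γ = A ++ δ₀ :: B →
        TypV (A ++ B) W δ₀ → TypC (A ++ B) (Comp.substC A.length W M) τ)
      ?s1 ?s2 ?s3 ?s4 ?s5 ?s6 ?s7 ?s8 ?s9 ?s10 ?s11 ?s12,
    @TypC.rec
      (fun Γ V δ _ => ∀ A B (δ₀ : TyD) (W : Val), Γ = A ++ δ₀ :: B →
        TypV (A ++ B) W δ₀ → TypV (A ++ B) (Val.substV A.length W V) δ)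
      (fun Γ M τ _ => ∀ A B (δ₀ : TyD) (W : Val), Γ = A ++ δ₀ :: B →
        TypV (A ++ B) W δ₀ → TypC (A ++ B) (Comp.substC A.length W M) τ)
      ?s1 ?s2 ?s3 ?s4 ?s5 ?s6 ?s7 ?s8 ?s9 ?s10 ?s11 ?s12⟩
  case s1 =>
    intro Γ n δ h A B δ₀ W hΓ hW
    subst hΓ
    rcases lt_trichotomy n A.length with hn | hn | hn
    · simp only [Val.substV, if_neg (by omega : ¬ n = A.length),
        if_neg (by omega : ¬ A.length < n)]
      refine TypV.var ?_
      rw [List.getElem?_append_left hn]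
      rwa [List.getElem?_append_left hn] at h
    · subst hn
      simp only [Val.substV, if_pos rfl]
      rw [List.getElem?_append_right (le_refl _)] at h
      simp at h
      subst h
      exact hW
    · simp only [Val.substV, if_neg (by omega : ¬ n = A.length), if_pos hn]
      refine TypV.var ?_
      rw [List.getElem?_append_right (by omega : A.length ≤ n - 1)]
      rw [List.getElem?_append_right (by omega : A.length ≤ n)] at h
      have h2 : n - A.length = (n - A.length - 1) + 1 := by omega
      rw [h2] at h
      simp only [List.getElem?_cons_succ] at h
      have h3 : n - 1 - A.length = n - A.length - 1 := by omega
      rw [h3]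
      exact h
  case s2 =>
    intro δ Γ M τ _ ih A B δ₀ W hΓ hW
    subst hΓ
    exact TypV.lam (by simpa using ih (δ :: A) B δ₀ (Val.shiftAux 0 W) rfl (typV_weak0 hW))
  case s3 => exact fun _ _ _ _ _ _ => TypV.omega
  case s4 => exact fun _ _ ih1 ih2 A B δ₀ W h hW => TypV.inter (ih1 A B δ₀ W h hW) (ih2 A B δ₀ W h hW)
  case s5 => exact fun _ hd ih A B δ₀ W h hW => TypV.sub (ih A B δ₀ W h hW) hd
  case s6 => exact fun _ ih A B δ₀ W h hW => TypC.ret (ih A B δ₀ W h hW)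
  case s7 => exact fun _ _ ih1 ih2 A B δ₀ W h hW => TypC.bind (ih1 A B δ₀ W h hW) (ih2 A B δ₀ W h hW)
  case s8 =>
    intro δ Γ M σ κ ℓ _ ih A B δ₀ W hΓ hW
    subst hΓ
    exact TypC.get (by simpa using ih (δ :: A) B δ₀ (Val.shiftAux 0 W) rfl (typV_weak0 hW))
  case s9 =>
    intro Γ V δ M ℓ σ κ _ _ hdom ih1 ih2 A B δ₀ W h hW
    exact TypC.set (ih1 A B δ₀ W h hW) (ih2 A B δ₀ W h hW) hdom
  case s10 => exact fun _ _ _ _ _ _ => TypC.omega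
  case s11 => exact fun _ _ ih1 ih2 A B δ₀ W h hW => TypC.inter (ih1 A B δ₀ W h hW) (ih2 A B δ₀ W h hW)
  case s12 => exact fun _ ht ih A B δ₀ W h hW => TypC.sub (ih A B δ₀ W h hW) ht

theorem typC_subst {Γ : Ctx} {M : Comp} {τ : TyT} {δ₀ : TyD} {W : Val}
    (h : TypC (δ₀ :: Γ) M τ) (hW : TypV Γ W δ₀) :
    TypC Γ (Comp.substC 0 W M) τ := by
  simpa using subst_all.2 h [] Γ δ₀ W rfl (by simpa using hW)
/-! ### Inversion lemmas -/

theorem typC_ret_inv {Γ : Ctx} {M₀ : Comp} {τ : TyT} (h : TypC Γ M₀ τ) :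
    ∀ V, M₀ = .ret V → ∀ σ,
      TypV Γ V (fstC (appT τ σ)) ∧ SubS σ (sndC (appT τ σ)) := by
  refine @TypC.rec (fun _ _ _ _ => True)
    (fun Γ M τ _ => ∀ V, M = .ret V → ∀ σ,
      TypV Γ V (fstC (appT τ σ)) ∧ SubS σ (sndC (appT τ σ)))
    ?_ ?_ ?_ ?_ ?_ ?r1 ?r2 ?r3 ?r4 ?r5 ?r6 ?r7 _ _ _ h
  case r1 =>
    intro Γ V δ σ₀ hV _ V' heq σ
    cases heq
    by_cases hs : SubS σ σ₀
    · simp only [appT, if_pos hs, fstC, sndC]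
      exact ⟨hV, hs⟩
    · simp only [appT, if_neg hs, fstC, sndC]
      exact ⟨TypV.omega, SubS.leOmega _⟩
  case r2 => intro _ _ _ _ _ _ _ _ _ _ _ _ V' heq; cases heq
  case r3 => intro _ _ _ _ _ _ _ _ V' heq; cases heq
  case r4 => intro _ _ _ _ _ _ _ _ _ _ _ _ V' heq; cases heq
  case r5 => exact fun _ _ _ => ⟨TypV.omega, SubS.leOmega _⟩
  case r6 =>
    intro Γ M τ₁ τ₂ _ _ ih1 ih2 V heq σ
    obtain ⟨h1, h2⟩ := ih1 V heq σ
    obtain ⟨h3, h4⟩ := ih2 V heq σ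
    exact ⟨TypV.inter h1 h3, SubS.interGlb h2 h4⟩
  case r7 =>
    intro Γ M τ₁ τ₂ _ ht ih V heq σ
    obtain ⟨h1, h2⟩ := ih V heq σ
    exact ⟨TypV.sub h1 (subC_fst (subT_mono ht σ)),
      SubS.trans h2 (subC_snd (subT_mono ht σ))⟩
  all_goals intros; trivial

theorem typC_bind_inv {Γ : Ctx} {M₀ : Comp} {τ : TyT} (h : TypC Γ M₀ τ) :
    ∀ M W, M₀ = .bind M W → ∀ σ, ∃ δ' σ',
      TypC Γ M (.arrow σ (.prod δ' σ')) ∧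
      TypV Γ W (.arrow δ' (.arrow σ' (appT τ σ))) := by
  refine @TypC.rec (fun _ _ _ _ => True)
    (fun Γ M₀ τ _ => ∀ M W, M₀ = .bind M W → ∀ σ, ∃ δ' σ',
      TypC Γ M (.arrow σ (.prod δ' σ')) ∧
      TypV Γ W (.arrow δ' (.arrow σ' (appT τ σ))))
    ?_ ?_ ?_ ?_ ?_ ?r1 ?r2 ?r3 ?r4 ?r5 ?r6 ?r7 _ _ _ h
  case r1 => intro _ _ _ _ _ _ M W heq; cases heq
  case r2 =>
    intro Γ M σ₀ δ' σ' V δ'' σ'' hM hV _ _ M' W' heq σ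
    cases heq
    by_cases hs : SubS σ σ₀
    · refine ⟨δ', σ', TypC.sub hM (SubT.arrowMono hs (SubC.refl _)), ?_⟩
      simpa only [appT, if_pos hs] using hV
    · exact ⟨.omega, .omega, typC_arrow_prod_omega,
        by simp only [appT, if_neg hs]; exact typV_omega_fun⟩
  case r3 => intro _ _ _ _ _ _ _ _ M' W' heq; cases heq
  case r4 => intro _ _ _ _ _ _ _ _ _ _ _ _ M' W' heq; cases heq
  case r5 =>
    intro Γ M M' W' heq σ
    exact ⟨.omega, .omega, typC_arrow_prod_omega, typV_omega_fun⟩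
  case r6 =>
    intro Γ M₁ τ₁ τ₂ _ _ ih1 ih2 M W heq σ
    obtain ⟨δ₁, σ₁, hM1, hW1⟩ := ih1 M W heq σ
    obtain ⟨δ₂, σ₂, hM2, hW2⟩ := ih2 M W heq σ
    refine ⟨δ₁.inter δ₂, σ₁.inter σ₂, ?_, ?_⟩
    · exact TypC.sub (TypC.inter hM1 hM2)
        (SubT.trans SubT.arrowInter (SubT.arrowMono (SubS.refl _) SubC.prodInter))
    · exact TypV.sub (TypV.inter hW1 hW2)
        (SubD.trans subD_arrow_pair (SubD.arrowMono (SubD.refl _) subT_arrow_pair))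
  case r7 =>
    intro Γ M₁ τ₁ τ₂ _ ht ih M W heq σ
    obtain ⟨δ', σ', hM, hW⟩ := ih M W heq σ
    exact ⟨δ', σ', hM, TypV.sub hW (SubD.arrowMono (SubD.refl _)
      (SubT.arrowMono (SubS.refl _) (subT_mono ht σ)))⟩
  all_goals intros; trivial

theorem typC_get_inv {Γ : Ctx} {M₀ : Comp} {τ : TyT} (h : TypC Γ M₀ τ) :
    ∀ ℓ M, M₀ = .get ℓ M → ∀ σ, ∃ δ,
      TypC (δ :: Γ) M (.arrow σ (appT τ σ)) ∧
      (SubS σ (.loc ℓ δ) ∨ SubD .omega δ) := by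
  refine @TypC.rec (fun _ _ _ _ => True)
    (fun Γ M₀ τ _ => ∀ ℓ M, M₀ = .get ℓ M → ∀ σ, ∃ δ,
      TypC (δ :: Γ) M (.arrow σ (appT τ σ)) ∧
      (SubS σ (.loc ℓ δ) ∨ SubD .omega δ))
    ?_ ?_ ?_ ?_ ?_ ?r1 ?r2 ?r3 ?r4 ?r5 ?r6 ?r7 _ _ _ h
  case r1 => intro _ _ _ _ _ _ ℓ M heq; cases heq
  case r2 => intro _ _ _ _ _ _ _ _ _ _ _ _ ℓ' M' heq; cases heq
  case r3 =>
    intro δ Γ M σ₀ κ ℓ hM _ ℓ' M' heq σ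
    cases heq
    by_cases hs : SubS σ ((TyS.loc ℓ δ).inter σ₀)
    · refine ⟨δ, ?_, Or.inl (SubS.trans hs SubS.interLeft)⟩
      simp only [appT]
      rw [if_pos hs]
      exact TypC.sub hM (SubT.arrowMono (SubS.trans hs SubS.interRight) (SubC.refl _))
    · refine ⟨.omega, ?_, Or.inr (SubD.refl _)⟩
      simp only [appT]
      rw [if_neg hs]
      exact typC_arrow_omega
  case r4 => intro _ _ _ _ _ _ _ _ _ _ _ _ ℓ' M' heq; cases heq
  case r5 =>
    intro Γ M ℓ M' heq σ
    exact ⟨.omega, typC_arrow_omega, Or.inr (SubD.refl _)⟩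
  case r6 =>
    intro Γ M₁ τ₁ τ₂ _ _ ih1 ih2 ℓ M heq σ
    obtain ⟨δ₁, hM1, hc1⟩ := ih1 ℓ M heq σ
    obtain ⟨δ₂, hM2, hc2⟩ := ih2 ℓ M heq σ
    refine ⟨δ₁.inter δ₂, ?_, ?_⟩
    · exact TypC.sub (TypC.inter (typC_narrow hM1 SubD.interLeft)
        (typC_narrow hM2 SubD.interRight)) SubT.arrowInter
    · rcases hc1 with hc1 | hc1 <;> rcases hc2 with hc2 | hc2
      · exact Or.inl (SubS.trans (SubS.interGlb hc1 hc2) SubS.locInter)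
      · exact Or.inl (SubS.trans hc1 (SubS.locMono
          (SubD.interGlb (SubD.refl _) (SubD.trans (SubD.leOmega _) hc2))))
      · exact Or.inl (SubS.trans hc2 (SubS.locMono
          (SubD.interGlb (SubD.trans (SubD.leOmega _) hc1) (SubD.refl _))))
      · exact Or.inr (SubD.interGlb hc1 hc2)
  case r7 =>
    intro Γ M₁ τ₁ τ₂ _ ht ih ℓ M heq σ
    obtain ⟨δ, hM, hc⟩ := ih ℓ M heq σ
    exact ⟨δ, TypC.sub hM (SubT.arrowMono (SubS.refl _) (subT_mono ht σ)), hc⟩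
  all_goals intros; trivial

theorem typC_set_inv {Γ : Ctx} {M₀ : Comp} {τ : TyT} (h : TypC Γ M₀ τ) :
    ∀ ℓ V M, M₀ = .set ℓ V M → ∀ σ, ∃ δ σ₀,
      TypV Γ V δ ∧ TypC Γ M (.arrow ((TyS.loc ℓ δ).inter σ₀) (appT τ σ)) ∧
      SubS σ σ₀ ∧ ℓ ∉ σ₀.domS := by
  refine @TypC.rec (fun _ _ _ _ => True)
    (fun Γ M₀ τ _ => ∀ ℓ V M, M₀ = .set ℓ V M → ∀ σ, ∃ δ σ₀,
      TypV Γ V δ ∧ TypC Γ M (.arrow ((TyS.loc ℓ δ).inter σ₀) (appT τ σ)) ∧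
      SubS σ σ₀ ∧ ℓ ∉ σ₀.domS)
    ?_ ?_ ?_ ?_ ?_ ?r1 ?r2 ?r3 ?r4 ?r5 ?r6 ?r7 _ _ _ h
  case r1 => intro _ _ _ _ _ _ ℓ V M heq; cases heq
  case r2 => intro _ _ _ _ _ _ _ _ _ _ _ _ ℓ V M heq; cases heq
  case r3 => intro _ _ _ _ _ _ _ _ ℓ V M heq; cases heq
  case r4 =>
    intro Γ V δ M ℓ σ₁ κ hV hM hdom _ _ ℓ' V' M' heq σ
    cases heq
    by_cases hs : SubS σ σ₁
    · exact ⟨δ, σ₁, hV, by simpa only [appT, if_pos hs] using hM, hs, hdom⟩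
    · refine ⟨.omega, .omega, TypV.omega, ?_, SubS.leOmega _, by simp [TyS.domS]⟩
      simp only [appT, if_neg hs]
      exact typC_arrow_omega
  case r5 =>
    intro Γ M ℓ V M' heq σ
    exact ⟨.omega, .omega, TypV.omega, typC_arrow_omega, SubS.leOmega _,
      by simp [TyS.domS]⟩
  case r6 =>
    intro Γ M₁ τ₁ τ₂ _ _ ih1 ih2 ℓ V M heq σ
    obtain ⟨δ₁, σ₁, hV1, hM1, hs1, hd1⟩ := ih1 ℓ V M heq σ
    obtain ⟨δ₂, σ₂, hV2, hM2, hs2, hd2⟩ := ih2 ℓ V M heq σ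
    refine ⟨δ₁.inter δ₂, σ₁.inter σ₂, TypV.inter hV1 hV2, ?_,
      SubS.interGlb hs1 hs2, by simp [TyS.domS]; exact ⟨hd1, hd2⟩⟩
    have k1 : SubS ((TyS.loc ℓ (δ₁.inter δ₂)).inter (σ₁.inter σ₂))
        ((TyS.loc ℓ δ₁).inter σ₁) :=
      SubS.interGlb (SubS.trans SubS.interLeft (SubS.locMono SubD.interLeft))
        (SubS.trans SubS.interRight SubS.interLeft)
    have k2 : SubS ((TyS.loc ℓ (δ₁.inter δ₂)).inter (σ₁.inter σ₂))
        ((TyS.loc ℓ δ₂).inter σ₂) :=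
      SubS.interGlb (SubS.trans SubS.interLeft (SubS.locMono SubD.interRight))
        (SubS.trans SubS.interRight SubS.interRight)
    exact TypC.sub (TypC.inter
        (TypC.sub hM1 (SubT.arrowMono k1 (SubC.refl _)))
        (TypC.sub hM2 (SubT.arrowMono k2 (SubC.refl _)))) SubT.arrowInter
  case r7 =>
    intro Γ M₁ τ₁ τ₂ _ ht ih ℓ V M heq σ
    obtain ⟨δ, σ₀, hV, hM, hs, hd⟩ := ih ℓ V M heq σ
    exact ⟨δ, σ₀, hV, TypC.sub hM (SubT.arrowMono (SubS.refl _) (subT_mono ht σ)),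
      hs, hd⟩
  all_goals intros; trivial

theorem typV_lam_inv {Γ : Ctx} {V₀ : Val} {δ : TyD} (h : TypV Γ V₀ δ) :
    ∀ M, V₀ = .lam M → ∀ δ₀, TypC (δ₀ :: Γ) M (appD δ δ₀) := by
  refine @TypV.rec
    (fun Γ V₀ δ _ => ∀ M, V₀ = .lam M → ∀ δ₀, TypC (δ₀ :: Γ) M (appD δ δ₀))
    (fun _ _ _ _ => True)
    ?r1 ?r2 ?r3 ?r4 ?r5 ?_ ?_ ?_ ?_ ?_ ?_ ?_ _ _ _ h
  case r1 => intro _ _ _ _ M heq; cases heq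
  case r2 =>
    intro δ₁ Γ M τ hM _ M' heq δ₀
    cases heq
    by_cases hs : SubD δ₀ δ₁
    · simp only [appD, if_pos hs]
      exact typC_narrow hM hs
    · simp only [appD, if_neg hs]
      exact TypC.omega
  case r3 => exact fun _ _ _ => TypC.omega
  case r4 =>
    intro Γ V δ₁ δ₂ _ _ ih1 ih2 M heq δ₀
    exact TypC.inter (ih1 M heq δ₀) (ih2 M heq δ₀)
  case r5 =>
    intro Γ V δ₁ δ₂ _ hd ih M heq δ₀
    exact TypC.sub (ih M heq δ₀) (subD_mono hd δ₀)
  all_goals intros; trivial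
/-! ### Store typing lemmas -/

theorem typS_dom {Γ : Ctx} {ℓ : Loc} :
    (s : Store) → ℓ ∈ s.dom → TypS Γ s (.loc ℓ .omega)
  | .emp, h => by simp [Store.dom] at h
  | .upd ℓ' u s, h => by
      by_cases e : ℓ' = ℓ
      · subst e
        exact TypS.updA TypL.omega
      · have hm : ℓ ∈ s.dom := by
          simp only [Store.dom, Finset.mem_insert] at h
          tauto
        exact TypS.updB (typS_dom s hm) e

theorem typS_upd_keep {Γ : Ctx} {ℓ : Loc} {u : Lkp} {s : Store} :
    (σ : TyS) → TypS Γ s σ → ℓ ∉ σ.domS → TypS Γ (.upd ℓ u s) σ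
  | .omega, _, _ => TypS.omega
  | .loc ℓ' δ, h, hd => by
      have : ℓ ≠ ℓ' := by
        simp [TyS.domS] at hd
        exact hd
      exact TypS.updB h this
  | .inter σ₁ σ₂, h, hd => by
      simp only [TyS.domS, Finset.mem_union] at hd
      push_neg at hd
      exact TypS.inter
        (typS_upd_keep σ₁ (TypS.sub h SubS.interLeft) hd.1)
        (typS_upd_keep σ₂ (TypS.sub h SubS.interRight) hd.2)

theorem typL_val_inv {Γ : Ctx} {u : Lkp} {δ : TyD} (h : TypL Γ u δ) :
    ∀ V, u = .val V → TypV Γ V δ := by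
  refine TypL.rec (motive_1 := fun _ _ _ => True)
    (motive_2 := fun u δ _ => ∀ V, u = .val V → TypV Γ V δ)
    ?_ ?_ ?_ ?_ ?_ ?r1 ?r2 ?r3 ?r4 ?r5 h
  case r1 => intro V δ hV V' heq; cases heq; exact hV
  case r2 => intro _ _ _ _ _ V' heq; cases heq
  case r3 => exact fun _ _ => TypV.omega
  case r4 => exact fun _ _ ih1 ih2 V heq => TypV.inter (ih1 V heq) (ih2 V heq)
  case r5 => exact fun _ hd ih V heq => TypV.sub (ih V heq) hd
  all_goals intros; trivial

theorem typL_lkp_inv {Γ : Ctx} {u : Lkp} {δ : TyD} (h : TypL Γ u δ) :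
    ∀ ℓ s, u = .lkp ℓ s → TypS Γ s (.loc ℓ δ) ∨ SubD .omega δ := by
  refine TypL.rec (motive_1 := fun _ _ _ => True)
    (motive_2 := fun u δ _ => ∀ ℓ s, u = .lkp ℓ s → TypS Γ s (.loc ℓ δ) ∨ SubD .omega δ)
    ?_ ?_ ?_ ?_ ?_ ?r1 ?r2 ?r3 ?r4 ?r5 h
  case r1 => intro _ _ _ ℓ s heq; cases heq
  case r2 => intro s ℓ δ hS _ ℓ' s' heq; cases heq; exact Or.inl hS
  case r3 => exact fun _ _ _ => Or.inr (SubD.refl _)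
  case r4 =>
    intro u δ₁ δ₂ _ _ ih1 ih2 ℓ s heq
    rcases ih1 ℓ s heq with h1 | h1 <;> rcases ih2 ℓ s heq with h2 | h2
    · exact Or.inl (TypS.sub (TypS.inter h1 h2) SubS.locInter)
    · exact Or.inl (TypS.sub h1 (SubS.locMono
        (SubD.interGlb (SubD.refl _) (SubD.trans (SubD.leOmega _) h2))))
    · exact Or.inl (TypS.sub h2 (SubS.locMono
        (SubD.interGlb (SubD.trans (SubD.leOmega _) h1) (SubD.refl _))))
    · exact Or.inr (SubD.interGlb h1 h2)
  case r5 =>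
    intro u δ₁ δ₂ _ hd ih ℓ s heq
    rcases ih ℓ s heq with h1 | h1
    · exact Or.inl (TypS.sub h1 (SubS.locMono hd))
    · exact Or.inr (SubD.trans h1 hd)
  all_goals intros; trivial

theorem typS_upd_inv {Γ : Ctx} {s₀ : Store} {σ : TyS} (h : TypS Γ s₀ σ) :
    ∀ ℓ u s, s₀ = .upd ℓ u s → ∀ ℓ₀, ℓ₀ ∈ σ.domS →
      (ℓ = ℓ₀ → TypL Γ u (projS σ ℓ₀)) ∧
      (ℓ ≠ ℓ₀ → TypS Γ s (.loc ℓ₀ (projS σ ℓ₀))) := by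
  refine TypS.rec
    (motive_1 := fun s₀ σ _ => ∀ ℓ u s, s₀ = .upd ℓ u s → ∀ ℓ₀, ℓ₀ ∈ σ.domS →
      (ℓ = ℓ₀ → TypL Γ u (projS σ ℓ₀)) ∧
      (ℓ ≠ ℓ₀ → TypS Γ s (.loc ℓ₀ (projS σ ℓ₀))))
    (motive_2 := fun _ _ _ => True)
    ?r1 ?r2 ?r3 ?r4 ?r5 ?_ ?_ ?_ ?_ ?_ h
  case r1 =>
    intro u δ ℓ s hL _ ℓ' u' s' heq ℓ₀ hm
    cases heq
    simp only [TyS.domS, Finset.mem_singleton] at hm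
    subst hm
    refine ⟨fun _ => ?_, fun hne => absurd rfl hne⟩
    simpa [projS] using hL
  case r2 =>
    intro s ℓ' δ ℓ u hS hne _ ℓ₁ u₁ s₁ heq ℓ₀ hm
    cases heq
    simp only [TyS.domS, Finset.mem_singleton] at hm
    subst hm
    refine ⟨fun he => absurd he hne, fun _ => ?_⟩
    simpa [projS] using hS
  case r3 => intro s ℓ u s' heq ℓ₀ hm; simp [TyS.domS] at hm
  case r4 =>
    intro s σ₁ σ₂ _ _ ih1 ih2 ℓ u s' heq ℓ₀ hm
    simp only [TyS.domS, Finset.mem_union] at hm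
    have getL : ℓ = ℓ₀ → TypL Γ u (projS (σ₁.inter σ₂) ℓ₀) := by
      intro he
      simp only [projS]
      by_cases h1 : ℓ₀ ∈ σ₁.domS <;> by_cases h2 : ℓ₀ ∈ σ₂.domS
      · exact TypL.inter ((ih1 ℓ u s' heq ℓ₀ h1).1 he) ((ih2 ℓ u s' heq ℓ₀ h2).1 he)
      · exact TypL.inter ((ih1 ℓ u s' heq ℓ₀ h1).1 he)
          (TypL.sub TypL.omega (projS_notin h2))
      · exact TypL.inter (TypL.sub TypL.omega (projS_notin h1))
          ((ih2 ℓ u s' heq ℓ₀ h2).1 he)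
      · tauto
    have getS : ℓ ≠ ℓ₀ → TypS Γ s' (.loc ℓ₀ (projS (σ₁.inter σ₂) ℓ₀)) := by
      intro hne
      simp only [projS]
      by_cases h1 : ℓ₀ ∈ σ₁.domS <;> by_cases h2 : ℓ₀ ∈ σ₂.domS
      · exact TypS.sub (TypS.inter ((ih1 ℓ u s' heq ℓ₀ h1).2 hne)
          ((ih2 ℓ u s' heq ℓ₀ h2).2 hne)) SubS.locInter
      · exact TypS.sub ((ih1 ℓ u s' heq ℓ₀ h1).2 hne) (SubS.locMono
          (SubD.interGlb (SubD.refl _) (SubD.trans (SubD.leOmega _) (projS_notin h2))))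
      · exact TypS.sub ((ih2 ℓ u s' heq ℓ₀ h2).2 hne) (SubS.locMono
          (SubD.interGlb (SubD.trans (SubD.leOmega _) (projS_notin h1)) (SubD.refl _)))
      · tauto
    exact ⟨getL, getS⟩
  case r5 =>
    intro s σ σ' _ hsub ih ℓ u s' heq ℓ₀ hm
    have hm' : ℓ₀ ∈ σ.domS := subS_dom hsub hm
    obtain ⟨g1, g2⟩ := ih ℓ u s' heq ℓ₀ hm'
    exact ⟨fun he => TypL.sub (g1 he) (subS_proj hsub ℓ₀),
      fun hne => TypS.sub (g2 hne) (SubS.locMono (subS_proj hsub ℓ₀))⟩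
  all_goals intros; trivial
/-! ### Store equations preserve typing -/

theorem typS_upd_inv_loc {Γ : Ctx} {ℓ : Loc} {u : Lkp} {s : Store} {ℓ₀ : Loc} {δ : TyD}
    (h : TypS Γ (.upd ℓ u s) (.loc ℓ₀ δ)) :
    (ℓ = ℓ₀ → TypL Γ u δ) ∧ (ℓ ≠ ℓ₀ → TypS Γ s (.loc ℓ₀ δ)) := by
  have := typS_upd_inv h ℓ u s rfl ℓ₀ (by simp [TyS.domS])
  simpa [projS] using this

theorem lkEq_pres {Γ : Ctx} {u v : Lkp} (h : LkEq u v) :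
    ∀ δ, TypL Γ u δ ↔ TypL Γ v δ := by
  refine LkEq.rec
    (motive_1 := fun s t _ => ∀ ℓ₀ δ, TypS Γ s (.loc ℓ₀ δ) ↔ TypS Γ t (.loc ℓ₀ δ))
    (motive_2 := fun u v _ => ∀ δ, TypL Γ u δ ↔ TypL Γ v δ)
    ?e1 ?e2 ?e3 ?e4 ?e5 ?e6 ?e7 ?e8 ?e9 ?e10 ?e11 ?e12 ?e13 h
  case e1 => exact fun s ℓ₀ δ => Iff.rfl
  case e2 => exact fun _ ih ℓ₀ δ => (ih ℓ₀ δ).symm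
  case e3 => exact fun _ _ ih1 ih2 ℓ₀ δ => (ih1 ℓ₀ δ).trans (ih2 ℓ₀ δ)
  case e4 =>
    intro u u' s s' ℓ _ _ ihu ihs ℓ₀ δ
    constructor
    · intro hT
      obtain ⟨g1, g2⟩ := typS_upd_inv_loc hT
      by_cases e : ℓ = ℓ₀
      · subst e
        exact TypS.updA ((ihu δ).mp (g1 rfl))
      · exact TypS.updB ((ihs ℓ₀ δ).mp (g2 e)) e
    · intro hT
      obtain ⟨g1, g2⟩ := typS_upd_inv_loc hT
      by_cases e : ℓ = ℓ₀
      · subst e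
        exact TypS.updA ((ihu δ).mpr (g1 rfl))
      · exact TypS.updB ((ihs ℓ₀ δ).mpr (g2 e)) e
  case e5 =>
    intro ℓ s hdom ℓ₀ δ
    constructor
    · intro hT
      obtain ⟨g1, g2⟩ := typS_upd_inv_loc hT
      by_cases e : ℓ = ℓ₀
      · subst e
        rcases typL_lkp_inv (g1 rfl) ℓ s rfl with hS | hω
        · exact hS
        · exact TypS.sub (typS_dom s hdom) (SubS.locMono hω)
      · exact g2 e
    · intro hT
      by_cases e : ℓ = ℓ₀
      · subst e
        exact TypS.updA (TypL.lkp hT)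
      · exact TypS.updB hT e
  case e6 =>
    intro ℓ u w s ℓ₀ δ
    constructor
    · intro hT
      obtain ⟨g1, g2⟩ := typS_upd_inv_loc hT
      by_cases e : ℓ = ℓ₀
      · subst e
        exact TypS.updA (g1 rfl)
      · exact TypS.updB ((typS_upd_inv_loc (g2 e)).2 e) e
    · intro hT
      obtain ⟨g1, g2⟩ := typS_upd_inv_loc hT
      by_cases e : ℓ = ℓ₀
      · subst e
        exact TypS.updA (g1 rfl)
      · exact TypS.updB (TypS.updB (g2 e) e) e
  case e7 =>
    intro ℓ ℓ' u w s hne ℓ₀ δ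
    constructor
    · intro hT
      obtain ⟨g1, g2⟩ := typS_upd_inv_loc hT
      by_cases e : ℓ = ℓ₀
      · subst e
        exact TypS.updB (TypS.updA (g1 rfl)) (Ne.symm hne)
      · obtain ⟨g3, g4⟩ := typS_upd_inv_loc (g2 e)
        by_cases e' : ℓ' = ℓ₀
        · subst e'
          exact TypS.updA (g3 rfl)
        · exact TypS.updB (TypS.updB (g4 e') e) e'
    · intro hT
      obtain ⟨g1, g2⟩ := typS_upd_inv_loc hT
      by_cases e' : ℓ' = ℓ₀
      · subst e'
        exact TypS.updB (TypS.updA (g1 rfl)) hne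
      · obtain ⟨g3, g4⟩ := typS_upd_inv_loc (g2 e')
        by_cases e : ℓ = ℓ₀
        · subst e
          exact TypS.updA (g3 rfl)
        · exact TypS.updB (TypS.updB (g4 e) e') e
  case e8 => exact fun u δ => Iff.rfl
  case e9 => exact fun _ ih δ => (ih δ).symm
  case e10 => exact fun _ _ ih1 ih2 δ => (ih1 δ).trans (ih2 δ)
  case e11 =>
    intro s s' ℓ hdom _ ihs δ
    constructor
    · intro hT
      rcases typL_lkp_inv hT ℓ s rfl with hS | hω
      · exact TypL.lkp ((ihs ℓ δ).mp hS)
      · exact TypL.sub TypL.omega hω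
    · intro hT
      rcases typL_lkp_inv hT ℓ s' rfl with hS | hω
      · exact TypL.lkp ((ihs ℓ δ).mpr hS)
      · exact TypL.sub TypL.omega hω
  case e12 =>
    intro ℓ u s δ
    constructor
    · intro hT
      rcases typL_lkp_inv hT ℓ (.upd ℓ u s) rfl with hS | hω
      · exact (typS_upd_inv_loc hS).1 rfl
      · exact TypL.sub TypL.omega hω
    · intro hT
      exact TypL.lkp (TypS.updA hT)
  case e13 =>
    intro ℓ ℓ' u s hne δ
    constructor
    · intro hT
      rcases typL_lkp_inv hT ℓ (.upd ℓ' u s) rfl with hS | hω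
      · exact TypL.lkp ((typS_upd_inv_loc hS).2 (Ne.symm hne))
      · exact TypL.sub TypL.omega hω
    · intro hT
      rcases typL_lkp_inv hT ℓ s rfl with hS | hω
      · exact TypL.lkp (TypS.updB hS (Ne.symm hne))
      · exact TypL.sub TypL.omega hω
/-! ### Putting it together -/

theorem appT_self {σ : TyS} {κ : TyC} : appT (.arrow σ κ) σ = κ := by
  simp [appT, SubS.refl]

theorem appD_self {δ : TyD} {τ : TyT} : appD (.arrow δ τ) δ = τ := by
  simp [appD, SubD.refl]

theorem subC_prod' : (κ : TyC) → SubC (.prod (fstC κ) (sndC κ)) κ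
  | .omega => SubC.leOmega _
  | .prod _ _ => SubC.refl _
  | .inter κ₁ κ₂ =>
      SubC.interGlb
        (SubC.trans (SubC.prodMono SubD.interLeft SubS.interLeft) (subC_prod' κ₁))
        (SubC.trans (SubC.prodMono SubD.interRight SubS.interRight) (subC_prod' κ₂))

theorem conf_inv {Γ : Ctx} {N : Comp} {t : Store} {κ : TyC}
    (h : TypConf Γ N t κ) : ∃ σ, TypC Γ N (.arrow σ κ) ∧ TypS Γ t σ := by
  induction h with
  | conf hM hs => exact ⟨_, hM, hs⟩
  | omega => exact ⟨.omega, TypC.sub TypC.omega SubT.omegaArrow, TypS.omega⟩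
  | inter _ _ ih1 ih2 =>
      obtain ⟨σ₁, h1, t1⟩ := ih1
      obtain ⟨σ₂, h2, t2⟩ := ih2
      exact ⟨σ₁.inter σ₂, TypC.sub (TypC.inter
        (TypC.sub h1 (SubT.arrowMono SubS.interLeft (SubC.refl _)))
        (TypC.sub h2 (SubT.arrowMono SubS.interRight (SubC.refl _))))
        SubT.arrowInter, TypS.inter t1 t2⟩
  | sub _ hsub ih =>
      obtain ⟨σ₁, h1, t1⟩ := ih
      exact ⟨σ₁, TypC.sub h1 (SubT.arrowMono (SubS.refl _) hsub), t1⟩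

theorem step {Γ : Ctx} : ∀ {p q : Comp × Store}, Red p q →
    ∀ {σ κ}, TypC Γ p.1 (.arrow σ κ) → TypS Γ p.2 σ → TypConf Γ q.1 q.2 κ := by
  intro p q hr
  induction hr with
  | @beta V M s =>
      intro σ κ hM hs
      obtain ⟨δ', σ', hret, hlam⟩ := typC_bind_inv hM _ _ rfl σ
      rw [appT_self] at hlam
      obtain ⟨hV, hσσ'⟩ := typC_ret_inv hret V rfl σ
      rw [appT_self] at hV hσσ'
      simp only [fstC, sndC] at hV hσσ'
      have hbody := typV_lam_inv hlam M rfl δ'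
      rw [appD_self] at hbody
      have hsub := typC_subst hbody hV
      exact TypConf.conf (TypC.sub hsub (SubT.arrowMono hσσ' (SubC.refl _))) hs
  | @bindl M s N t V _ ih =>
      intro σ κ hMV hs
      obtain ⟨δ', σ', hM, hW⟩ := typC_bind_inv hMV _ _ rfl σ
      rw [appT_self] at hW
      have hconf := ih hM hs
      obtain ⟨σ₁, hN, ht⟩ := conf_inv hconf
      have hW' : TypV Γ V (.arrow δ' (.arrow σ' (.prod (fstC κ) (sndC κ)))) :=
        TypV.sub hW (SubD.arrowMono (SubD.refl _)
          (SubT.arrowMono (SubS.refl _) (subC_prod κ)))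
      exact TypConf.sub (TypConf.conf (TypC.bind hN hW') ht) (subC_prod' κ)
  | @get ℓ s V M hlk =>
      intro σ κ hG hs
      obtain ⟨δ, hM, hc⟩ := typC_get_inv hG _ _ rfl σ
      rw [appT_self] at hM
      have hV : TypV Γ V δ := by
        rcases hc with hsl | hω
        · have hs' : TypS Γ s (.loc ℓ δ) := TypS.sub hs hsl
          have hval : TypL Γ (.val V) δ := (lkEq_pres hlk δ).mp (TypL.lkp hs')
          exact typL_val_inv hval V rfl
        · exact TypV.sub TypV.omega hω
      exact TypConf.conf (typC_subst hM hV) hs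
  | @set ℓ V M s =>
      intro σ κ hS hs
      obtain ⟨δ, σ₀, hV, hM, hσ, hdom⟩ := typC_set_inv hS _ _ _ rfl σ
      rw [appT_self] at hM
      have ht : TypS Γ (.upd ℓ (.val V) s) ((TyS.loc ℓ δ).inter σ₀) :=
        TypS.inter (TypS.updA (TypL.val hV))
          (typS_upd_keep σ₀ (TypS.sub hs hσ) hdom)
      exact TypConf.conf hM ht

/-- subject reduction. -/
theorem subject_reduction {Γ : Ctx} {M N : Comp} {s t : Store} {κ : TyC}
    (h : TypConf Γ M s κ) (hr : Red (M, s) (N, t)) :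
    TypConf Γ N t κ := by
  induction h with
  | conf hM hs => exact step hr hM hs
  | omega => exact TypConf.omega
  | inter _ _ ih1 ih2 => exact TypConf.inter (ih1 hr) (ih2 hr)
  | sub _ hsub ih => exact TypConf.sub (ih hr) hsub
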